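/- arXiv:2101.03350 — 7 statements merged into one kernel-verified Lean document; each statement's English description precedes it below -/
import Mathlib

section
/- The number of vectors a = (a_0, ..., a_7) in Z^8 with a_0 ≥ 0, a_0^2 - a_1^2 - ⋯ - a_7^2 = -1, and 3a_0 + a_1 + ⋯ + a_7 = 1 is exactly 56. -/
def Fdp2 : Finset (Fin 8 → ℤ) := ([
  ![0, 1, 0, 0, 0, 0, 0, 0],
  ![0, 0, 1, 0, 0, 0, 0, 0],
  ![0, 0, 0, 1, 0, 0, 0, 0],
  ![0, 0, 0, 0, 1, 0, 0, 0],
  ![0, 0, 0, 0, 0, 1, 0, 0],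
  ![0, 0, 0, 0, 0, 0, 1, 0],
  ![0, 0, 0, 0, 0, 0, 0, 1],
  ![1, -1, -1, 0, 0, 0, 0, 0],
  ![1, -1, 0, -1, 0, 0, 0, 0],
  ![1, -1, 0, 0, -1, 0, 0, 0],
  ![1, -1, 0, 0, 0, -1, 0, 0],
  ![1, -1, 0, 0, 0, 0, -1, 0],
  ![1, -1, 0, 0, 0, 0, 0, -1],
  ![1, 0, -1, -1, 0, 0, 0, 0],
  ![1, 0, -1, 0, -1, 0, 0, 0],
  ![1, 0, -1, 0, 0, -1, 0, 0],
  ![1, 0, -1, 0, 0, 0, -1, 0],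
  ![1, 0, -1, 0, 0, 0, 0, -1],
  ![1, 0, 0, -1, -1, 0, 0, 0],
  ![1, 0, 0, -1, 0, -1, 0, 0],
  ![1, 0, 0, -1, 0, 0, -1, 0],
  ![1, 0, 0, -1, 0, 0, 0, -1],
  ![1, 0, 0, 0, -1, -1, 0, 0],
  ![1, 0, 0, 0, -1, 0, -1, 0],
  ![1, 0, 0, 0, -1, 0, 0, -1],
  ![1, 0, 0, 0, 0, -1, -1, 0],
  ![1, 0, 0, 0, 0, -1, 0, -1],
  ![1, 0, 0, 0, 0, 0, -1, -1],
  ![2, 0, 0, -1, -1, -1, -1, -1],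
  ![2, 0, -1, 0, -1, -1, -1, -1],
  ![2, 0, -1, -1, 0, -1, -1, -1],
  ![2, 0, -1, -1, -1, 0, -1, -1],
  ![2, 0, -1, -1, -1, -1, 0, -1],
  ![2, 0, -1, -1, -1, -1, -1, 0],
  ![2, -1, 0, 0, -1, -1, -1, -1],
  ![2, -1, 0, -1, 0, -1, -1, -1],
  ![2, -1, 0, -1, -1, 0, -1, -1],
  ![2, -1, 0, -1, -1, -1, 0, -1],
  ![2, -1, 0, -1, -1, -1, -1, 0],
  ![2, -1, -1, 0, 0, -1, -1, -1],
  ![2, -1, -1, 0, -1, 0, -1, -1],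
  ![2, -1, -1, 0, -1, -1, 0, -1],
  ![2, -1, -1, 0, -1, -1, -1, 0],
  ![2, -1, -1, -1, 0, 0, -1, -1],
  ![2, -1, -1, -1, 0, -1, 0, -1],
  ![2, -1, -1, -1, 0, -1, -1, 0],
  ![2, -1, -1, -1, -1, 0, 0, -1],
  ![2, -1, -1, -1, -1, 0, -1, 0],
  ![2, -1, -1, -1, -1, -1, 0, 0],
  ![3, -2, -1, -1, -1, -1, -1, -1],
  ![3, -1, -2, -1, -1, -1, -1, -1],
  ![3, -1, -1, -2, -1, -1, -1, -1],
  ![3, -1, -1, -1, -2, -1, -1, -1],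
  ![3, -1, -1, -1, -1, -2, -1, -1],
  ![3, -1, -1, -1, -1, -1, -2, -1],
  ![3, -1, -1, -1, -1, -1, -1, -2]] : List (Fin 8 → ℤ)).toFinset

lemma vec_ext8 (a : Fin 8 → ℤ) : a = ![a 0, a 1, a 2, a 3, a 4, a 5, a 6, a 7] := by
  funext i; fin_cases i <;> rfl

lemma cv5' (a b c d e f g : ℤ) : ![a,b,c,d,e,f,g] 5 = f := rfl
lemma cv6' (a b c d e f g : ℤ) : ![a,b,c,d,e,f,g] 6 = g := rfl

lemma consec (n : ℤ) : 0 ≤ n * (n - 1) := by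
  rcases le_or_gt n 0 with h | h
  · have := mul_nonneg (by omega : (0:ℤ) ≤ -n) (by omega : (0:ℤ) ≤ 1 - n)
    nlinarith
  · exact mul_nonneg (by omega) (by omega)

lemma pin (s x : ℤ) (h : (x+s)*(x+s-1) = 0) : x = -s ∨ x = 1-s := by
  rcases mul_eq_zero.mp h with h | h <;> omega

lemma fdp2_sound : ∀ v ∈ Fdp2, 0 ≤ v 0 ∧
    (v 0) ^ 2 - ∑ i : Fin 7, (v i.succ) ^ 2 = -1 ∧
    3 * v 0 + ∑ i : Fin 7, v i.succ = 1 := by decide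

set_option maxHeartbeats 2000000 in
/-- The number of vectors `a = (a₀, …, a₇) ∈ ℤ⁸` with `a₀ ≥ 0`,
`a₀² - a₁² - ⋯ - a₇² = -1` and `3a₀ + a₁ + ⋯ + a₇ = 1` is exactly `56`. -/
theorem card_minusOneClasses :
    ({a : Fin 8 → ℤ | 0 ≤ a 0 ∧
        (a 0) ^ 2 - ∑ i : Fin 7, (a i.succ) ^ 2 = -1 ∧
        3 * a 0 + ∑ i : Fin 7, a i.succ = 1} : Set (Fin 8 → ℤ)).ncard = 56 := by
  have hset : ({a : Fin 8 → ℤ | 0 ≤ a 0 ∧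
        (a 0) ^ 2 - ∑ i : Fin 7, (a i.succ) ^ 2 = -1 ∧
        3 * a 0 + ∑ i : Fin 7, a i.succ = 1} : Set (Fin 8 → ℤ)) = ↑Fdp2 := by
    ext a
    simp only [Set.mem_setOf_eq, Finset.mem_coe]
    constructor
    · rintro ⟨h0, h1, h2⟩
      obtain ⟨x0,x1,x2,x3,x4,x5,x6,x7,rfl⟩ :
          ∃ x0 x1 x2 x3 x4 x5 x6 x7, a = ![x0,x1,x2,x3,x4,x5,x6,x7] :=
        ⟨_,_,_,_,_,_,_,_, vec_ext8 a⟩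
      simp only [Fin.sum_univ_seven, cv5', cv6', Matrix.cons_val_zero, Matrix.cons_val_one,
        Matrix.head_cons, Matrix.cons_val_two, Matrix.tail_cons, Matrix.cons_val_three,
        Matrix.cons_val_four, Matrix.cons_val_succ] at h0 h1 h2
      have e1 : x1^2+x2^2+x3^2+x4^2+x5^2+x6^2+x7^2 = x0^2+1 := by linarith
      have e2 : x1+x2+x3+x4+x5+x6+x7 = 1 - 3*x0 := by linarith
      have keyid : 7*(x1^2+x2^2+x3^2+x4^2+x5^2+x6^2+x7^2) - (x1+x2+x3+x4+x5+x6+x7)^2 = (x1-x2)^2 + (x1-x3)^2 + (x1-x4)^2 + (x1-x5)^2 + (x1-x6)^2 + (x1-x7)^2 + (x2-x3)^2 + (x2-x4)^2 + (x2-x5)^2 + (x2-x6)^2 + (x2-x7)^2 + (x3-x4)^2 + (x3-x5)^2 + (x3-x6)^2 + (x3-x7)^2 + (x4-x5)^2 + (x4-x6)^2 + (x4-x7)^2 + (x5-x6)^2 + (x5-x7)^2 + (x6-x7)^2 := by ring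
      have key : (x1+x2+x3+x4+x5+x6+x7)^2 ≤ 7*(x1^2+x2^2+x3^2+x4^2+x5^2+x6^2+x7^2) := by nlinarith [sq_nonneg (x1-x2), sq_nonneg (x1-x3), sq_nonneg (x1-x4), sq_nonneg (x1-x5), sq_nonneg (x1-x6), sq_nonneg (x1-x7), sq_nonneg (x2-x3), sq_nonneg (x2-x4), sq_nonneg (x2-x5), sq_nonneg (x2-x6), sq_nonneg (x2-x7), sq_nonneg (x3-x4), sq_nonneg (x3-x5), sq_nonneg (x3-x6), sq_nonneg (x3-x7), sq_nonneg (x4-x5), sq_nonneg (x4-x6), sq_nonneg (x4-x7), sq_nonneg (x5-x6), sq_nonneg (x5-x7), sq_nonneg (x6-x7)]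
      have key' : (1-3*x0)^2 ≤ 7*(x0^2+1) := by rw [← e1, ← e2]; exact key
      have h10 : 10*x0 ≤ 38 := by nlinarith [key', sq_nonneg (x0-4)]
      have hb : x0 ≤ 3 := by omega
      clear e1 e2 keyid key key' h10
      interval_cases x0
      · -- x0 = 0
        have c1 := consec (x1+0)
        have c2 := consec (x2+0)
        have c3 := consec (x3+0)
        have c4 := consec (x4+0)
        have c5 := consec (x5+0)
        have c6 := consec (x6+0)
        have c7 := consec (x7+0)
        have hsum : ((x1+0)*(x1+0-1)) + ((x2+0)*(x2+0-1)) + ((x3+0)*(x3+0-1)) + ((x4+0)*(x4+0-1)) + ((x5+0)*(x5+0-1)) + ((x6+0)*(x6+0-1)) + ((x7+0)*(x7+0-1)) = 0 := by linear_combination -h1 - h2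
        have t1 : (x1+0)*(x1+0-1) = 0 := by linarith
        have t2 : (x2+0)*(x2+0-1) = 0 := by linarith
        have t3 : (x3+0)*(x3+0-1) = 0 := by linarith
        have t4 : (x4+0)*(x4+0-1) = 0 := by linarith
        have t5 : (x5+0)*(x5+0-1) = 0 := by linarith
        have t6 : (x6+0)*(x6+0-1) = 0 := by linarith
        have t7 : (x7+0)*(x7+0-1) = 0 := by linarith
        clear h1 c1 c2 c3 c4 c5 c6 c7 hsum
        rcases pin 0 x1 t1 with rfl | rfl <;>
        rcases pin 0 x2 t2 with rfl | rfl <;>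
        rcases pin 0 x3 t3 with rfl | rfl <;>
        rcases pin 0 x4 t4 with rfl | rfl <;>
        rcases pin 0 x5 t5 with rfl | rfl <;>
        rcases pin 0 x6 t6 with rfl | rfl <;>
        rcases pin 0 x7 t7 with rfl | rfl <;>
        first | decide | exact absurd h2 (by decide)
      · -- x0 = 1
        have c1 := consec (x1+1)
        have c2 := consec (x2+1)
        have c3 := consec (x3+1)
        have c4 := consec (x4+1)
        have c5 := consec (x5+1)
        have c6 := consec (x6+1)
        have c7 := consec (x7+1)
        have hsum : ((x1+1)*(x1+1-1)) + ((x2+1)*(x2+1-1)) + ((x3+1)*(x3+1-1)) + ((x4+1)*(x4+1-1)) + ((x5+1)*(x5+1-1)) + ((x6+1)*(x6+1-1)) + ((x7+1)*(x7+1-1)) = 0 := by linear_combination -h1 + h2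
        have t1 : (x1+1)*(x1+1-1) = 0 := by linarith
        have t2 : (x2+1)*(x2+1-1) = 0 := by linarith
        have t3 : (x3+1)*(x3+1-1) = 0 := by linarith
        have t4 : (x4+1)*(x4+1-1) = 0 := by linarith
        have t5 : (x5+1)*(x5+1-1) = 0 := by linarith
        have t6 : (x6+1)*(x6+1-1) = 0 := by linarith
        have t7 : (x7+1)*(x7+1-1) = 0 := by linarith
        clear h1 c1 c2 c3 c4 c5 c6 c7 hsum
        rcases pin 1 x1 t1 with rfl | rfl <;>
        rcases pin 1 x2 t2 with rfl | rfl <;>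
        rcases pin 1 x3 t3 with rfl | rfl <;>
        rcases pin 1 x4 t4 with rfl | rfl <;>
        rcases pin 1 x5 t5 with rfl | rfl <;>
        rcases pin 1 x6 t6 with rfl | rfl <;>
        rcases pin 1 x7 t7 with rfl | rfl <;>
        first | decide | exact absurd h2 (by decide)
      · -- x0 = 2
        have c1 := consec (x1+1)
        have c2 := consec (x2+1)
        have c3 := consec (x3+1)
        have c4 := consec (x4+1)
        have c5 := consec (x5+1)
        have c6 := consec (x6+1)
        have c7 := consec (x7+1)
        have hsum : ((x1+1)*(x1+1-1)) + ((x2+1)*(x2+1-1)) + ((x3+1)*(x3+1-1)) + ((x4+1)*(x4+1-1)) + ((x5+1)*(x5+1-1)) + ((x6+1)*(x6+1-1)) + ((x7+1)*(x7+1-1)) = 0 := by linear_combination -h1 + h2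
        have t1 : (x1+1)*(x1+1-1) = 0 := by linarith
        have t2 : (x2+1)*(x2+1-1) = 0 := by linarith
        have t3 : (x3+1)*(x3+1-1) = 0 := by linarith
        have t4 : (x4+1)*(x4+1-1) = 0 := by linarith
        have t5 : (x5+1)*(x5+1-1) = 0 := by linarith
        have t6 : (x6+1)*(x6+1-1) = 0 := by linarith
        have t7 : (x7+1)*(x7+1-1) = 0 := by linarith
        clear h1 c1 c2 c3 c4 c5 c6 c7 hsum
        rcases pin 1 x1 t1 with rfl | rfl <;>
        rcases pin 1 x2 t2 with rfl | rfl <;>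
        rcases pin 1 x3 t3 with rfl | rfl <;>
        rcases pin 1 x4 t4 with rfl | rfl <;>
        rcases pin 1 x5 t5 with rfl | rfl <;>
        rcases pin 1 x6 t6 with rfl | rfl <;>
        rcases pin 1 x7 t7 with rfl | rfl <;>
        first | decide | exact absurd h2 (by decide)
      · -- x0 = 3
        have c1 := consec (x1+2)
        have c2 := consec (x2+2)
        have c3 := consec (x3+2)
        have c4 := consec (x4+2)
        have c5 := consec (x5+2)
        have c6 := consec (x6+2)
        have c7 := consec (x7+2)
        have hsum : ((x1+2)*(x1+2-1)) + ((x2+2)*(x2+2-1)) + ((x3+2)*(x3+2-1)) + ((x4+2)*(x4+2-1)) + ((x5+2)*(x5+2-1)) + ((x6+2)*(x6+2-1)) + ((x7+2)*(x7+2-1)) = 0 := by linear_combination -h1 + 3*h2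
        have t1 : (x1+2)*(x1+2-1) = 0 := by linarith
        have t2 : (x2+2)*(x2+2-1) = 0 := by linarith
        have t3 : (x3+2)*(x3+2-1) = 0 := by linarith
        have t4 : (x4+2)*(x4+2-1) = 0 := by linarith
        have t5 : (x5+2)*(x5+2-1) = 0 := by linarith
        have t6 : (x6+2)*(x6+2-1) = 0 := by linarith
        have t7 : (x7+2)*(x7+2-1) = 0 := by linarith
        clear h1 c1 c2 c3 c4 c5 c6 c7 hsum
        rcases pin 2 x1 t1 with rfl | rfl <;>
        rcases pin 2 x2 t2 with rfl | rfl <;>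
        rcases pin 2 x3 t3 with rfl | rfl <;>
        rcases pin 2 x4 t4 with rfl | rfl <;>
        rcases pin 2 x5 t5 with rfl | rfl <;>
        rcases pin 2 x6 t6 with rfl | rfl <;>
        rcases pin 2 x7 t7 with rfl | rfl <;>
        first | decide | exact absurd h2 (by decide)
    · intro h
      exact fdp2_sound a h
  rw [hset, Set.ncard_coe_finset]
  decide
end

section
/- Any vector a in Z^8 with a_0 ≥ 0 satisfying a_0^2 - a_1^2 - ⋯ - a_7^2 = -2 and 3a_0 + a_1 + ⋯ + a_7 = 0 is, up to permutation of the last 7 coordinates, one of: l_i - l_j (i ≠ j), l_0 - l_i - l_j - l_k (i,j,k distinct), or 2l_0 - l_1 - ⋯ - l_7 + l_i. -/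
/-- The intersection form of signature (1,7) on the Picard lattice `ℤ⁸`
of a degree-2 weak Del Pezzo surface. -/
def dpForm (x y : Fin 8 → ℤ) : ℤ :=
  x 0 * y 0 - ∑ i : Fin 7, x i.succ * y i.succ

/-- The canonical class `K = (-3, 1, 1, 1, 1, 1, 1, 1)`. -/
def dpK : Fin 8 → ℤ := ![-3, 1, 1, 1, 1, 1, 1, 1]

/-- The basis classes `l i` (`l 0` the line class, `l i` the exceptional classes). -/
def l (i : Fin 8) : Fin 8 → ℤ := Pi.single i 1

/-- A `(-1)`-class: `D² = -1`, `⟨D, K⟩ = -1`, nonnegative leading coefficient. -/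
def IsMinusOneClass (D : Fin 8 → ℤ) : Prop :=
  dpForm D D = -1 ∧ dpForm D dpK = -1 ∧ 0 ≤ D 0

/-- A `(-2)`-class: `F² = -2`, `⟨F, K⟩ = 0`, nonnegative leading coefficient. -/
def IsMinusTwoClass (F : Fin 8 → ℤ) : Prop :=
  dpForm F F = -2 ∧ dpForm F dpK = 0 ∧ 0 ≤ F 0

lemma l_apply (i m : Fin 8) : l i m = if m = i then 1 else 0 := by
  simp [l, Pi.single_apply]

lemma l_zero_zero : l (0 : Fin 8) 0 = 1 := by rw [l_apply]; simp

lemma l_succ_zero (m : Fin 7) : l m.succ 0 = 0 := by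
  rw [l_apply]
  simp [(Fin.succ_ne_zero m).symm]

lemma l_zero_succ (n : Fin 7) : l (0 : Fin 8) n.succ = 0 := by
  rw [l_apply]
  simp [Fin.succ_ne_zero n]

lemma l_succ_succ (m k : Fin 7) : l m.succ k.succ = if k = m then 1 else 0 := by
  rw [l_apply]
  simp [Fin.succ_inj]

lemma sum_l_zero : (∑ m : Fin 7, l m.succ) 0 = 0 := by
  rw [Finset.sum_apply]
  simp [l_succ_zero]

lemma sum_l_succ (k : Fin 7) : (∑ m : Fin 7, l m.succ) k.succ = 1 := by
  rw [Finset.sum_apply]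
  simp only [l_succ_succ]
  rw [Finset.sum_ite_eq Finset.univ k (fun _ => (1 : ℤ))]
  simp

lemma eq_caseA (a : Fin 8 → ℤ) (i j : Fin 7)
    (h0 : a 0 = 0) (hi : a i.succ = 1) (hj : a j.succ = -1)
    (hz : ∀ k : Fin 7, k ≠ i → k ≠ j → a k.succ = 0) :
    a = l i.succ - l j.succ := by
  have hij : i ≠ j := by intro h; rw [h, hj] at hi; omega
  funext m
  induction m using Fin.cases with
  | zero => simp [h0, l_succ_zero]
  | succ k =>
    simp only [Pi.sub_apply, l_succ_succ]
    by_cases hki : k = i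
    · simp [hki, hi, hij]
    · by_cases hkj : k = j
      · simp [hkj, hj, Ne.symm hij]
      · simp [hz k hki hkj, hki, hkj]

lemma eq_caseB (a : Fin 8 → ℤ) (i j k : Fin 7)
    (hij : i ≠ j) (hik : i ≠ k) (hjk : j ≠ k)
    (h0 : a 0 = 1) (hi : a i.succ = -1) (hj : a j.succ = -1) (hk : a k.succ = -1)
    (hz : ∀ m : Fin 7, m ≠ i → m ≠ j → m ≠ k → a m.succ = 0) :
    a = l 0 - l i.succ - l j.succ - l k.succ := by
  funext m
  induction m using Fin.cases with
  | zero => simp [h0, l_zero_zero, l_succ_zero]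
  | succ n =>
    simp only [Pi.sub_apply, l_zero_succ, l_succ_succ]
    by_cases h1 : n = i
    · simp [h1, hi, hij, hik]
    · by_cases h2 : n = j
      · simp [h2, hj, Ne.symm hij, hjk]
      · by_cases h3 : n = k
        · simp [h3, hk, Ne.symm hik, Ne.symm hjk]
        · simp [h1, h2, h3, hz n h1 h2 h3]

lemma eq_caseC (a : Fin 8 → ℤ) (i : Fin 7)
    (h0 : a 0 = 2) (hi : a i.succ = 0)
    (hz : ∀ k : Fin 7, k ≠ i → a k.succ = -1) :
    a = (2 : ℤ) • l 0 - (∑ m : Fin 7, l m.succ) + l i.succ := by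
  funext m
  induction m using Fin.cases with
  | zero =>
    simp only [Pi.add_apply, Pi.sub_apply, Pi.smul_apply, sum_l_zero, l_zero_zero,
      l_succ_zero, smul_eq_mul]
    omega
  | succ n =>
    simp only [Pi.add_apply, Pi.sub_apply, Pi.smul_apply, sum_l_succ, l_zero_succ,
      l_succ_succ, smul_eq_mul, mul_zero]
    by_cases h1 : n = i
    · simp [h1, hi]
    · simp [h1, hz n h1]

/-- Any vector `a ∈ ℤ⁸` with `a₀ ≥ 0`, `a₀² - a₁² - ⋯ - a₇² = -2` and
`3a₀ + a₁ + ⋯ + a₇ = 0` is one of: `l i - l j` (`i ≠ j`),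
`l 0 - l i - l j - l k` (`i, j, k` distinct), or `2 l 0 - l 1 - ⋯ - l 7 + l i`,
with `i, j, k` ranging over the last seven coordinates. -/
theorem minusTwoClass_classification (a : Fin 8 → ℤ) (h0 : 0 ≤ a 0)
    (hsq : (a 0) ^ 2 - ∑ i : Fin 7, (a i.succ) ^ 2 = -2)
    (hK : 3 * a 0 + ∑ i : Fin 7, a i.succ = 0) :
    (∃ i j : Fin 7, i ≠ j ∧ a = l i.succ - l j.succ) ∨
    (∃ i j k : Fin 7, i ≠ j ∧ i ≠ k ∧ j ≠ k ∧
        a = l 0 - l i.succ - l j.succ - l k.succ) ∨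
    (∃ i : Fin 7, a = (2 : ℤ) • l 0 - (∑ m : Fin 7, l m.succ) + l i.succ) := by
  -- Cauchy–Schwarz bound on a 0
  have hcs := Finset.sum_mul_sq_le_sq_mul_sq Finset.univ (fun i : Fin 7 => a i.succ)
    (fun _ => (1 : ℤ))
  simp only [mul_one, one_pow, Finset.sum_const, Finset.card_univ, Fintype.card_fin,
    nsmul_eq_mul] at hcs
  have hs : ∑ i : Fin 7, a i.succ = -3 * a 0 := by linarith
  have hq : ∑ i : Fin 7, (a i.succ) ^ 2 = (a 0) ^ 2 + 2 := by linarith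
  rw [hs, hq] at hcs
  push_cast at hcs
  have h7 : a 0 ^ 2 ≤ 7 := by nlinarith
  have h6 : 6 * a 0 ≤ 16 := by nlinarith [sq_nonneg (a 0 - 3)]
  obtain hA | hB | hC : a 0 = 0 ∨ a 0 = 1 ∨ a 0 = 2 := by omega
  · -- case a 0 = 0 : one +1, one -1
    left
    rw [hA] at hs hq
    have hq' : ∑ i : Fin 7, (a i.succ) ^ 2 = 2 := by simpa using hq
    have hs' : ∑ i : Fin 7, a i.succ = 0 := by simpa using hs
    have hb : ∀ i : Fin 7, a i.succ = -1 ∨ a i.succ = 0 ∨ a i.succ = 1 := by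
      intro i
      have h1 : (a i.succ) ^ 2 ≤ 2 := by
        rw [← hq']
        exact Finset.single_le_sum (f := fun j : Fin 7 => (a j.succ) ^ 2)
          (fun j _ => sq_nonneg _) (Finset.mem_univ i)
      have h2 : -1 ≤ a i.succ := by nlinarith
      have h3 : a i.succ ≤ 1 := by nlinarith
      omega
    set T := Finset.univ.filter (fun i : Fin 7 => a i.succ ≠ 0) with hT
    have hTq : ∑ i ∈ T, (a i.succ) ^ 2 = 2 := by
      rw [← hq']
      refine Finset.sum_subset (Finset.filter_subset _ _) ?_
      intro i _ hi
      simp only [hT, Finset.mem_filter, Finset.mem_univ, true_and, not_not] at hi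
      simp [hi]
    have hone : ∀ i ∈ T, (a i.succ) ^ 2 = 1 := by
      intro i hi
      simp only [hT, Finset.mem_filter, Finset.mem_univ, true_and] at hi
      rcases hb i with h | h | h <;> simp [h] at hi ⊢
    have hcard : T.card = 2 := by
      rw [Finset.sum_congr rfl hone, Finset.sum_const, nsmul_eq_mul, mul_one] at hTq
      exact_mod_cast hTq
    obtain ⟨i, j, hij, hTij⟩ := Finset.card_eq_two.mp hcard
    have hTs : ∑ i ∈ T, a i.succ = 0 := by
      rw [← hs']
      refine Finset.sum_subset (Finset.filter_subset _ _) ?_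
      intro i _ hi
      simpa only [hT, Finset.mem_filter, Finset.mem_univ, true_and, not_not] using hi
    rw [hTij, Finset.sum_pair hij] at hTs
    have hiT : a i.succ ≠ 0 := by
      have : i ∈ T := hTij ▸ Finset.mem_insert_self i {j}
      simpa only [hT, Finset.mem_filter, Finset.mem_univ, true_and] using this
    have hjT : a j.succ ≠ 0 := by
      have : j ∈ T := hTij ▸ Finset.mem_insert_of_mem (Finset.mem_singleton_self j)
      simpa only [hT, Finset.mem_filter, Finset.mem_univ, true_and] using this
    have hz : ∀ k : Fin 7, k ≠ i → k ≠ j → a k.succ = 0 := by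
      intro k h1 h2
      by_contra h
      have : k ∈ T := by simp [hT, h]
      rw [hTij] at this
      simp only [Finset.mem_insert, Finset.mem_singleton] at this
      tauto
    rcases hb i with h | h | h
    · have hj1 : a j.succ = 1 := by rcases hb j with h' | h' | h' <;> omega
      exact ⟨j, i, hij.symm, eq_caseA a j i hA hj1 h (fun k h1 h2 => hz k h2 h1)⟩
    · exact absurd h hiT
    · have hj1 : a j.succ = -1 := by rcases hb j with h' | h' | h' <;> omega
      exact ⟨i, j, hij, eq_caseA a i j hA h hj1 hz⟩
  · -- case a 0 = 1 : three -1's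
    right; left
    rw [hB] at hs hq
    have hq' : ∑ i : Fin 7, (a i.succ) ^ 2 = 3 := by simpa using hq
    have hs' : ∑ i : Fin 7, a i.succ = -3 := by simpa using hs
    have key : ∑ i : Fin 7, (a i.succ) * (a i.succ + 1) = 0 := by
      have h1 : ∀ i ∈ (Finset.univ : Finset (Fin 7)), (a i.succ) * (a i.succ + 1) = (a i.succ) ^ 2 + a i.succ :=
        fun i _ => by ring
      rw [Finset.sum_congr rfl h1, Finset.sum_add_distrib, hq', hs']
      ring
    have hterm : ∀ i ∈ (Finset.univ : Finset (Fin 7)), (0 : ℤ) ≤ (a i.succ) * (a i.succ + 1) := by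
      intro i _
      rcases le_or_gt 0 (a i.succ) with h | h
      · positivity
      · nlinarith
    have hzero := (Finset.sum_eq_zero_iff_of_nonneg hterm).mp key
    have hb : ∀ i : Fin 7, a i.succ = 0 ∨ a i.succ = -1 := by
      intro i
      have := hzero i (Finset.mem_univ i)
      rcases mul_eq_zero.mp this with h | h
      · exact Or.inl h
      · exact Or.inr (by omega)
    set T := Finset.univ.filter (fun i : Fin 7 => a i.succ ≠ 0) with hT
    have hTmem : ∀ i ∈ T, a i.succ = -1 := by
      intro i hi
      simp only [hT, Finset.mem_filter, Finset.mem_univ, true_and] at hi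
      rcases hb i with h | h
      · exact absurd h hi
      · exact h
    have hTs : ∑ i ∈ T, a i.succ = -3 := by
      rw [← hs']
      refine Finset.sum_subset (Finset.filter_subset _ _) ?_
      intro i _ hi
      simpa only [hT, Finset.mem_filter, Finset.mem_univ, true_and, not_not] using hi
    have hcard : T.card = 3 := by
      rw [Finset.sum_congr rfl hTmem, Finset.sum_const, nsmul_eq_mul] at hTs
      omega
    obtain ⟨i, j, k, hij, hik, hjk, hTijk⟩ := Finset.card_eq_three.mp hcard
    have hmem : ∀ m : Fin 7, m = i ∨ m = j ∨ m = k → a m.succ = -1 := by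
      intro m hm
      apply hTmem
      rw [hTijk]
      simp only [Finset.mem_insert, Finset.mem_singleton]
      tauto
    have hz : ∀ m : Fin 7, m ≠ i → m ≠ j → m ≠ k → a m.succ = 0 := by
      intro m h1 h2 h3
      by_contra h
      have : m ∈ T := by simp [hT, h]
      rw [hTijk] at this
      simp only [Finset.mem_insert, Finset.mem_singleton] at this
      tauto
    exact ⟨i, j, k, hij, hik, hjk,
      eq_caseB a i j k hij hik hjk hB (hmem i (Or.inl rfl)) (hmem j (Or.inr (Or.inl rfl)))
        (hmem k (Or.inr (Or.inr rfl))) hz⟩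
  · -- case a 0 = 2 : six -1's, one 0
    right; right
    rw [hC] at hs hq
    have hq' : ∑ i : Fin 7, (a i.succ) ^ 2 = 6 := by simpa using hq
    have hs' : ∑ i : Fin 7, a i.succ = -6 := by simpa using hs
    have key : ∑ i : Fin 7, (a i.succ + 1) ^ 2 = 1 := by
      have h1 : ∑ i : Fin 7, (a i.succ + 1) ^ 2
          = ∑ i : Fin 7, ((a i.succ) ^ 2 + (2 * a i.succ + 1)) :=
        Finset.sum_congr rfl (fun i _ => by ring)
      have h2 : ∑ i : Fin 7, ((2 : ℤ) * a i.succ + 1)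
          = 2 * (∑ i : Fin 7, a i.succ) + 7 := by
        rw [Finset.sum_add_distrib, ← Finset.mul_sum]
        simp
      rw [h1, Finset.sum_add_distrib, hq', h2, hs']
      ring
    set T := Finset.univ.filter (fun i : Fin 7 => a i.succ ≠ -1) with hT
    have hTq : ∑ i ∈ T, (a i.succ + 1) ^ 2 = 1 := by
      have hsub : ∑ i ∈ T, (a i.succ + 1) ^ 2 = ∑ i : Fin 7, (a i.succ + 1) ^ 2 := by
        refine Finset.sum_subset (Finset.filter_subset _ _) ?_
        intro i _ hi
        simp only [hT, Finset.mem_filter, Finset.mem_univ, true_and, not_not] at hi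
        simp [hi]
      rw [hsub, key]
    have hTone : ∀ i ∈ T, (1 : ℤ) ≤ (a i.succ + 1) ^ 2 := by
      intro i hi
      simp only [hT, Finset.mem_filter, Finset.mem_univ, true_and] at hi
      have h1 : a i.succ + 1 ≠ 0 := by omega
      have h2 : 0 < (a i.succ + 1) ^ 2 := by positivity
      linarith [Int.lt_iff_add_one_le.mp h2]
    have hcard1 : T.card ≤ 1 := by
      have hle := Finset.card_nsmul_le_sum T (fun i => (a i.succ + 1) ^ 2) 1 hTone
      rw [hTq, nsmul_eq_mul, mul_one] at hle
      exact_mod_cast hle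
    have hcardne : T.card ≠ 0 := by
      intro h
      have hTe : T = ∅ := Finset.card_eq_zero.mp h
      have hall : ∀ i : Fin 7, a i.succ = -1 := by
        intro i
        by_contra hne
        have : i ∈ T := by simp [hT, hne]
        rw [hTe] at this
        exact absurd this (Finset.notMem_empty i)
      have : ∑ i : Fin 7, a i.succ = -7 := by
        rw [Finset.sum_congr rfl (fun i _ => hall i)]
        simp
      omega
    have hcard : T.card = 1 := by omega
    obtain ⟨i, hTi⟩ := Finset.card_eq_one.mp hcard
    have hz : ∀ k : Fin 7, k ≠ i → a k.succ = -1 := by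
      intro k hk
      by_contra h
      have : k ∈ T := by simp [hT, h]
      rw [hTi] at this
      exact hk (Finset.mem_singleton.mp this)
    have hsum : ∑ m ∈ Finset.univ.erase i, a m.succ + a i.succ = -6 := by
      rw [Finset.sum_erase_add _ _ (Finset.mem_univ i), hs']
    have herase : ∑ m ∈ Finset.univ.erase i, a m.succ = -6 := by
      rw [Finset.sum_congr rfl (fun m hm => hz m (Finset.ne_of_mem_erase hm))]
      rw [Finset.sum_const, Finset.card_erase_of_mem (Finset.mem_univ i)]
      simp
    have hi0 : a i.succ = 0 := by omega
    exact ⟨i, eq_caseC a i hC hi0 hz⟩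
end

section
/- Let D_1 and D_2 be two (-1)-classes in the Picard lattice of a degree-2 weak Del Pezzo surface (vectors with ⟨D⟩^2 = -1 and ⟨D, K⟩ = -1). Then ⟨D_1, D_2⟩ ∈ {-1, 0, 1, 2}. -/
lemma dpForm_expand (x y : Fin 8 → ℤ) : dpForm x y =
    x 0*y 0 - (x 1*y 1 + x 2*y 2 + x 3*y 3 + x 4*y 4 + x 5*y 5 + x 6*y 6 + x 7*y 7) := by
  simp [dpForm, Fin.sum_univ_seven]

lemma dpK_expand : dpK 0 = -3 ∧ dpK 1 = 1 ∧ dpK 2 = 1 ∧ dpK 3 = 1 ∧ dpK 4 = 1 ∧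
    dpK 5 = 1 ∧ dpK 6 = 1 ∧ dpK 7 = 1 := by
  refine ⟨rfl, rfl, rfl, rfl, rfl, rfl, rfl, rfl⟩

/-- Cauchy–Schwarz type inequality: if seven integers sum to `3t` then `t² ≤ Σ xᵢ²`. -/
lemma cs_aux (t x1 x2 x3 x4 x5 x6 x7 : ℤ)
    (h : x1 + x2 + x3 + x4 + x5 + x6 + x7 = 3 * t) :
    t ^ 2 ≤ x1 ^ 2 + x2 ^ 2 + x3 ^ 2 + x4 ^ 2 + x5 ^ 2 + x6 ^ 2 + x7 ^ 2 := by
  have h9 : (x1 + x2 + x3 + x4 + x5 + x6 + x7) ^ 2 = 9 * t ^ 2 := by rw [h]; ring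
  have e : 7 * (x1 ^ 2 + x2 ^ 2 + x3 ^ 2 + x4 ^ 2 + x5 ^ 2 + x6 ^ 2 + x7 ^ 2)
      - (x1 + x2 + x3 + x4 + x5 + x6 + x7) ^ 2
      = (x1 - x2) ^ 2 + (x1 - x3) ^ 2 + (x1 - x4) ^ 2 + (x1 - x5) ^ 2 + (x1 - x6) ^ 2
      + (x1 - x7) ^ 2 + (x2 - x3) ^ 2 + (x2 - x4) ^ 2 + (x2 - x5) ^ 2 + (x2 - x6) ^ 2
      + (x2 - x7) ^ 2 + (x3 - x4) ^ 2 + (x3 - x5) ^ 2 + (x3 - x6) ^ 2 + (x3 - x7) ^ 2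
      + (x4 - x5) ^ 2 + (x4 - x6) ^ 2 + (x4 - x7) ^ 2 + (x5 - x6) ^ 2 + (x5 - x7) ^ 2
      + (x6 - x7) ^ 2 := by ring
  have p : (0:ℤ) ≤ (x1 - x2) ^ 2 + (x1 - x3) ^ 2 + (x1 - x4) ^ 2 + (x1 - x5) ^ 2
      + (x1 - x6) ^ 2 + (x1 - x7) ^ 2 + (x2 - x3) ^ 2 + (x2 - x4) ^ 2 + (x2 - x5) ^ 2
      + (x2 - x6) ^ 2 + (x2 - x7) ^ 2 + (x3 - x4) ^ 2 + (x3 - x5) ^ 2 + (x3 - x6) ^ 2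
      + (x3 - x7) ^ 2 + (x4 - x5) ^ 2 + (x4 - x6) ^ 2 + (x4 - x7) ^ 2 + (x5 - x6) ^ 2
      + (x5 - x7) ^ 2 + (x6 - x7) ^ 2 := by positivity
  linarith [sq_nonneg t]

/-- For two `(-1)`-classes `D₁, D₂`, the pairing `⟨D₁, D₂⟩` is `-1`, `0`, `1` or `2`. -/
theorem pairing_of_minusOneClasses (D1 D2 : Fin 8 → ℤ)
    (h1 : IsMinusOneClass D1) (h2 : IsMinusOneClass D2) :
    dpForm D1 D2 ∈ ({-1, 0, 1, 2} : Set ℤ) := by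
  obtain ⟨ha1, ha2, -⟩ := h1
  obtain ⟨hb1, hb2, -⟩ := h2
  rw [dpForm_expand] at ha1 ha2 hb1 hb2
  obtain ⟨k0, k1, k2, k3, k4, k5, k6, k7⟩ := dpK_expand
  rw [k0, k1, k2, k3, k4, k5, k6, k7] at ha2 hb2
  -- lower bound: D1 - D2 is orthogonal to K, hence has nonpositive square
  have key1 := cs_aux (D1 0 - D2 0) (D2 1 - D1 1) (D2 2 - D1 2) (D2 3 - D1 3)
    (D2 4 - D1 4) (D2 5 - D1 5) (D2 6 - D1 6) (D2 7 - D1 7) (by linarith)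
  -- upper bound: D1 + D2 + K is orthogonal to K, hence has nonpositive square
  have key2 := cs_aux (-(D1 0 + D2 0 - 3)) (D1 1 + D2 1 + 1) (D1 2 + D2 2 + 1)
    (D1 3 + D2 3 + 1) (D1 4 + D2 4 + 1) (D1 5 + D2 5 + 1) (D1 6 + D2 6 + 1)
    (D1 7 + D2 7 + 1) (by linarith)
  have hlow : -1 ≤ dpForm D1 D2 := by
    rw [dpForm_expand]
    ring_nf at key1 ha1 hb1 ⊢
    linarith
  have hhigh : dpForm D1 D2 ≤ 2 := by
    rw [dpForm_expand]
    ring_nf at key2 ha1 hb1 ha2 hb2 ⊢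
    linarith
  simp only [Set.mem_insert_iff, Set.mem_singleton_iff]
  omega
end

section
/- Let D be a (-1)-class and F a (-2)-class in the Picard lattice of a degree-2 weak Del Pezzo surface. Then ⟨D, F⟩ ∈ {-1, 0, 1}. -/
lemma dpExpand (x y : Fin 8 → ℤ) : dpForm x y =
    x 0 * y 0 - (x 1 * y 1 + x 2 * y 2 + x 3 * y 3 + x 4 * y 4 + x 5 * y 5
      + x 6 * y 6 + x 7 * y 7) := by
  have e2 : (Fin.succ 2 : Fin 8) = 3 := rfl
  have e3 : (Fin.succ 3 : Fin 8) = 4 := rfl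
  have e4 : (Fin.succ 4 : Fin 8) = 5 := rfl
  have e5 : (Fin.succ 5 : Fin 8) = 6 := rfl
  have e6 : (Fin.succ 6 : Fin 8) = 7 := rfl
  simp [dpForm, Fin.sum_univ_seven, e2, e3, e4, e5, e6]

/-- The form is negative semidefinite on the orthogonal complement of `K`. -/
lemma dpForm_self_nonpos (v : Fin 8 → ℤ) (h : dpForm v dpK = 0) : dpForm v v ≤ 0 := by
  rw [dpExpand] at h ⊢
  have k0 : dpK 0 = -3 := rfl
  have k1 : dpK 1 = 1 := rfl
  have k2 : dpK 2 = 1 := rfl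
  have k3 : dpK 3 = 1 := rfl
  have k4 : dpK 4 = 1 := rfl
  have k5 : dpK 5 = 1 := rfl
  have k6 : dpK 6 = 1 := rfl
  have k7 : dpK 7 = 1 := rfl
  rw [k0, k1, k2, k3, k4, k5, k6, k7] at h
  have cs : 7 * (v 1 * v 1 + v 2 * v 2 + v 3 * v 3 + v 4 * v 4 + v 5 * v 5 + v 6 * v 6 + v 7 * v 7)
      - (v 1 + v 2 + v 3 + v 4 + v 5 + v 6 + v 7) ^ 2
      = (v 1 - v 2)^2 + (v 1 - v 3)^2 + (v 1 - v 4)^2 + (v 1 - v 5)^2 + (v 1 - v 6)^2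
        + (v 1 - v 7)^2 + (v 2 - v 3)^2 + (v 2 - v 4)^2 + (v 2 - v 5)^2 + (v 2 - v 6)^2
        + (v 2 - v 7)^2 + (v 3 - v 4)^2 + (v 3 - v 5)^2 + (v 3 - v 6)^2 + (v 3 - v 7)^2
        + (v 4 - v 5)^2 + (v 4 - v 6)^2 + (v 4 - v 7)^2 + (v 5 - v 6)^2 + (v 5 - v 7)^2
        + (v 6 - v 7)^2 := by ring
  have hpos : 0 ≤ (v 1 - v 2)^2 + (v 1 - v 3)^2 + (v 1 - v 4)^2 + (v 1 - v 5)^2 + (v 1 - v 6)^2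
        + (v 1 - v 7)^2 + (v 2 - v 3)^2 + (v 2 - v 4)^2 + (v 2 - v 5)^2 + (v 2 - v 6)^2
        + (v 2 - v 7)^2 + (v 3 - v 4)^2 + (v 3 - v 5)^2 + (v 3 - v 6)^2 + (v 3 - v 7)^2
        + (v 4 - v 5)^2 + (v 4 - v 6)^2 + (v 4 - v 7)^2 + (v 5 - v 6)^2 + (v 5 - v 7)^2
        + (v 6 - v 7)^2 := by positivity
  have hsum : v 1 + v 2 + v 3 + v 4 + v 5 + v 6 + v 7 = -3 * v 0 := by linarith
  rw [hsum] at cs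
  have h9 : (-3 * v 0) ^ 2 = 9 * (v 0 * v 0) := by ring
  rw [h9] at cs
  have h0 : 0 ≤ v 0 * v 0 := mul_self_nonneg _
  linarith

/-- For a `(-1)`-class `D` and a `(-2)`-class `F`, the pairing `⟨D, F⟩` is `-1`, `0` or `1`. -/
theorem pairing_minusOne_minusTwo (D F : Fin 8 → ℤ)
    (hD : IsMinusOneClass D) (hF : IsMinusTwoClass F) :
    dpForm D F ∈ ({-1, 0, 1} : Set ℤ) := by
  obtain ⟨hD1, hD2, -⟩ := hD
  obtain ⟨hF1, hF2, -⟩ := hF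
  set n : ℤ := dpForm D F with hn
  have k0 : dpK 0 = -3 := rfl
  have k1 : dpK 1 = 1 := rfl
  have k2 : dpK 2 = 1 := rfl
  have k3 : dpK 3 = 1 := rfl
  have k4 : dpK 4 = 1 := rfl
  have k5 : dpK 5 = 1 := rfl
  have k6 : dpK 6 = 1 := rfl
  have k7 : dpK 7 = 1 := rfl
  set z : Fin 8 → ℤ := fun i => n * F i + 2 * D i + dpK i with hz
  have hzi : ∀ i, z i = n * F i + 2 * D i + dpK i := fun i => rfl
  have hzK : dpForm z dpK = 0 := by
    rw [dpExpand] at hF2 hD2 ⊢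
    simp only [hzi, k0, k1, k2, k3, k4, k5, k6, k7] at hF2 hD2 ⊢
    linear_combination n * hF2 + 2 * hD2
  have hzz := dpForm_self_nonpos z hzK
  have hval : dpForm z z = 2 * n ^ 2 - 6 := by
    rw [dpExpand] at hF1 hD1 hF2 hD2 hzz ⊢
    have hn' : n = dpForm D F := hn
    rw [dpExpand] at hn'
    simp only [hzi, k0, k1, k2, k3, k4, k5, k6, k7] at hF2 hD2 ⊢
    linear_combination n ^ 2 * hF1 + 4 * hD1 + 2 * n * hF2 + 4 * hD2 - 4 * n * hn'
  rw [hval] at hzz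
  have h1 : -1 ≤ n := by nlinarith
  have h2 : n ≤ 1 := by nlinarith
  simp only [Set.mem_insert_iff, Set.mem_singleton_iff]
  omega
end

section
/- Let D_1 and D_2 be (-1)-classes in the Picard lattice of a degree-2 weak Del Pezzo surface. Then ⟨D_1, D_2⟩ = 2 if and only if D_1 + D_2 = -K. -/
private lemma core (a0 a1 a2 a3 a4 a5 a6 a7 b0 b1 b2 b3 b4 b5 b6 b7 : ℤ)
    (ha2 : a0*a0 - (a1*a1+a2*a2+a3*a3+a4*a4+a5*a5+a6*a6+a7*a7) = -1)
    (haK : a0*(-3) - (a1+a2+a3+a4+a5+a6+a7) = -1)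
    (hb2 : b0*b0 - (b1*b1+b2*b2+b3*b3+b4*b4+b5*b5+b6*b6+b7*b7) = -1)
    (hbK : b0*(-3) - (b1+b2+b3+b4+b5+b6+b7) = -1)
    (hab : a0*b0 - (a1*b1+a2*b2+a3*b3+a4*b4+a5*b5+a6*b6+a7*b7) = 2) :
    a0+b0 = 3 ∧ a1+b1 = -1 ∧ a2+b2 = -1 ∧ a3+b3 = -1 ∧ a4+b4 = -1 ∧
      a5+b5 = -1 ∧ a6+b6 = -1 ∧ a7+b7 = -1 := by
  set v0 := a0 + b0 - 3 with hv0def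
  set v1 := a1 + b1 + 1 with hv1def
  set v2 := a2 + b2 + 1 with hv2def
  set v3 := a3 + b3 + 1 with hv3def
  set v4 := a4 + b4 + 1 with hv4def
  set v5 := a5 + b5 + 1 with hv5def
  set v6 := a6 + b6 + 1 with hv6def
  set v7 := a7 + b7 + 1 with hv7def
  have hsum : v1+v2+v3+v4+v5+v6+v7 = -3*v0 := by
    simp only [hv0def, hv1def, hv2def, hv3def, hv4def, hv5def, hv6def, hv7def]
    linarith
  have hsq : v0^2 - (v1^2+v2^2+v3^2+v4^2+v5^2+v6^2+v7^2) = 0 := by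
    simp only [hv0def, hv1def, hv2def, hv3def, hv4def, hv5def, hv6def, hv7def]
    linear_combination ha2 + hb2 + 2*hab + 2*haK + 2*hbK
  have h9 : (v1+v2+v3+v4+v5+v6+v7)^2 = 9*v0^2 := by rw [hsum]; ring
  have hv0sq : v0^2 = 0 := by
    linarith [sq_nonneg (v1-v2), sq_nonneg (v1-v3), sq_nonneg (v1-v4), sq_nonneg (v1-v5),
      sq_nonneg (v1-v6), sq_nonneg (v1-v7), sq_nonneg (v2-v3), sq_nonneg (v2-v4),
      sq_nonneg (v2-v5), sq_nonneg (v2-v6), sq_nonneg (v2-v7), sq_nonneg (v3-v4),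
      sq_nonneg (v3-v5), sq_nonneg (v3-v6), sq_nonneg (v3-v7), sq_nonneg (v4-v5),
      sq_nonneg (v4-v6), sq_nonneg (v4-v7), sq_nonneg (v5-v6), sq_nonneg (v5-v7),
      sq_nonneg (v6-v7), sq_nonneg v0]
  have hv0 : v0 = 0 := by
    have := pow_eq_zero_iff (n := 2) (by norm_num) |>.mp hv0sq
    exact this
  have hz : v1^2+v2^2+v3^2+v4^2+v5^2+v6^2+v7^2 = 0 := by
    rw [hv0] at hsq; linarith
  have h1 : v1 = 0 := by
    have : v1^2 = 0 := by
      linarith [sq_nonneg v2, sq_nonneg v3, sq_nonneg v4, sq_nonneg v5, sq_nonneg v6,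
        sq_nonneg v7, sq_nonneg v1]
    exact pow_eq_zero_iff (n := 2) (by norm_num) |>.mp this
  have h2 : v2 = 0 := by
    have : v2^2 = 0 := by
      linarith [sq_nonneg v1, sq_nonneg v3, sq_nonneg v4, sq_nonneg v5, sq_nonneg v6,
        sq_nonneg v7, sq_nonneg v2]
    exact pow_eq_zero_iff (n := 2) (by norm_num) |>.mp this
  have h3 : v3 = 0 := by
    have : v3^2 = 0 := by
      linarith [sq_nonneg v1, sq_nonneg v2, sq_nonneg v4, sq_nonneg v5, sq_nonneg v6,
        sq_nonneg v7, sq_nonneg v3]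
    exact pow_eq_zero_iff (n := 2) (by norm_num) |>.mp this
  have h4 : v4 = 0 := by
    have : v4^2 = 0 := by
      linarith [sq_nonneg v1, sq_nonneg v2, sq_nonneg v3, sq_nonneg v5, sq_nonneg v6,
        sq_nonneg v7, sq_nonneg v4]
    exact pow_eq_zero_iff (n := 2) (by norm_num) |>.mp this
  have h5 : v5 = 0 := by
    have : v5^2 = 0 := by
      linarith [sq_nonneg v1, sq_nonneg v2, sq_nonneg v3, sq_nonneg v4, sq_nonneg v6,
        sq_nonneg v7, sq_nonneg v5]
    exact pow_eq_zero_iff (n := 2) (by norm_num) |>.mp this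
  have h6 : v6 = 0 := by
    have : v6^2 = 0 := by
      linarith [sq_nonneg v1, sq_nonneg v2, sq_nonneg v3, sq_nonneg v4, sq_nonneg v5,
        sq_nonneg v7, sq_nonneg v6]
    exact pow_eq_zero_iff (n := 2) (by norm_num) |>.mp this
  have h7 : v7 = 0 := by
    have : v7^2 = 0 := by
      linarith [sq_nonneg v1, sq_nonneg v2, sq_nonneg v3, sq_nonneg v4, sq_nonneg v5,
        sq_nonneg v6, sq_nonneg v7]
    exact pow_eq_zero_iff (n := 2) (by norm_num) |>.mp this
  simp only [hv0def, hv1def, hv2def, hv3def, hv4def, hv5def, hv6def, hv7def] at hv0 h1 h2 h3 h4 h5 h6 h7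
  exact ⟨by linarith, by linarith, by linarith, by linarith, by linarith, by linarith,
    by linarith, by linarith⟩

/-- For `(-1)`-classes `D₁, D₂`: `⟨D₁, D₂⟩ = 2` if and only if `D₁ + D₂ = -K`. -/
theorem pairing_eq_two_iff (D1 D2 : Fin 8 → ℤ)
    (h1 : IsMinusOneClass D1) (h2 : IsMinusOneClass D2) :
    dpForm D1 D2 = 2 ↔ D1 + D2 = -dpK := by
  obtain ⟨ha2, haK, -⟩ := h1
  obtain ⟨hb2, hbK, -⟩ := h2
  simp only [dpForm, Fin.sum_univ_seven,
    show (0:Fin 7).succ = 1 from rfl, show (1:Fin 7).succ = 2 from rfl,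
    show (2:Fin 7).succ = 3 from rfl, show (3:Fin 7).succ = 4 from rfl,
    show (4:Fin 7).succ = 5 from rfl, show (5:Fin 7).succ = 6 from rfl,
    show (6:Fin 7).succ = 7 from rfl,
    show dpK 0 = -3 from rfl, show dpK 1 = 1 from rfl, show dpK 2 = 1 from rfl,
    show dpK 3 = 1 from rfl, show dpK 4 = 1 from rfl, show dpK 5 = 1 from rfl,
    show dpK 6 = 1 from rfl, show dpK 7 = 1 from rfl, mul_one] at ha2 haK hb2 hbK ⊢
  constructor
  · intro hab
    obtain ⟨e0, e1, e2, e3, e4, e5, e6, e7⟩ :=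
      core (D1 0) (D1 1) (D1 2) (D1 3) (D1 4) (D1 5) (D1 6) (D1 7)
        (D2 0) (D2 1) (D2 2) (D2 3) (D2 4) (D2 5) (D2 6) (D2 7)
        ha2 haK hb2 hbK hab
    funext i
    fin_cases i <;>
      simp only [Pi.add_apply, Pi.neg_apply,
        show -dpK 0 = 3 from rfl, show -dpK 1 = -1 from rfl, show -dpK 2 = -1 from rfl,
        show -dpK 3 = -1 from rfl, show -dpK 4 = -1 from rfl, show -dpK 5 = -1 from rfl,
        show -dpK 6 = -1 from rfl, show -dpK 7 = -1 from rfl] <;>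
      first
        | exact e0 | exact e1 | exact e2 | exact e3 | exact e4 | exact e5 | exact e6
        | exact e7 | linarith
  · intro h
    have e : ∀ i, D1 i + D2 i = -dpK i := fun i => by
      have := congrFun h i; simpa using this
    have e0 := e 0; have e1 := e 1; have e2 := e 2; have e3 := e 3
    have e4 := e 4; have e5 := e 5; have e6 := e 6; have e7 := e 7
    simp only [show -dpK 0 = 3 from rfl, show -dpK 1 = -1 from rfl,
      show -dpK 2 = -1 from rfl, show -dpK 3 = -1 from rfl, show -dpK 4 = -1 from rfl,
      show -dpK 5 = -1 from rfl, show -dpK 6 = -1 from rfl, show -dpK 7 = -1 from rfl]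
      at e0 e1 e2 e3 e4 e5 e6 e7
    linear_combination (D1 0)*e0 - (D1 1)*e1 - (D1 2)*e2 - (D1 3)*e3 - (D1 4)*e4 -
      (D1 5)*e5 - (D1 6)*e6 - (D1 7)*e7 - ha2 - haK
end

section
/- Let E and E' be two (-1)-classes, each orthogonal-to-none of exactly three pairwise-orthogonal (-2)-classes: ⟨E, F_i⟩ = 1 and ⟨E', F'_i⟩ = 1 for i = 1,2,3, where 2E = -K - F_1 - F_2 - F_3 and 2E' = -K - F'_1 - F'_2 - F'_3, with all F_i, F'_j (-2)-classes having pairwise intersection numbers in {0, 1} (and -2 only when equal). If E ≠ E', then exactly one of F_1, F_2, F_3 coincides with one of F'_1, F'_2, F'_3, and ⟨E, E'⟩ = 0. -/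
lemma dpForm_comm (x y : Fin 8 → ℤ) : dpForm x y = dpForm y x := by
  simp [dpForm, mul_comm]

lemma dpForm_sub_left (x y z : Fin 8 → ℤ) :
    dpForm (x - y) z = dpForm x z - dpForm y z := by
  simp [dpForm, sub_mul, Finset.sum_sub_distrib]; ring

lemma dpForm_sub_right (x y z : Fin 8 → ℤ) :
    dpForm x (y - z) = dpForm x y - dpForm x z := by
  rw [dpForm_comm, dpForm_sub_left, dpForm_comm y x, dpForm_comm z x]

lemma dpForm_neg_left (x z : Fin 8 → ℤ) : dpForm (-x) z = -dpForm x z := by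
  simp [dpForm, Finset.sum_neg_distrib]; ring

lemma dpForm_neg_right (x z : Fin 8 → ℤ) : dpForm x (-z) = -dpForm x z := by
  rw [dpForm_comm, dpForm_neg_left, dpForm_comm]

lemma dpForm_smul_left (c : ℤ) (x z : Fin 8 → ℤ) :
    dpForm (c • x) z = c * dpForm x z := by
  simp [dpForm, Finset.mul_sum, mul_assoc, mul_sub]

lemma dpForm_smul_right (c : ℤ) (x z : Fin 8 → ℤ) :
    dpForm x (c • z) = c * dpForm x z := by
  rw [dpForm_comm, dpForm_smul_left, dpForm_comm]

lemma dpKK : dpForm dpK dpK = 2 := by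
  simp [dpForm, dpK, Fin.sum_univ_seven]

/-- Let `E, E'` be distinct `(-1)`-classes, each meeting three pairwise-orthogonal
`(-2)`-classes `F₁,F₂,F₃` resp. `F'₁,F'₂,F'₃` with `2E = -K - F₁ - F₂ - F₃` and
`2E' = -K - F'₁ - F'₂ - F'₃`, and such that distinct classes among the `Fᵢ, F'ⱼ` are
orthogonal.  Then exactly one of `F₁,F₂,F₃` coincides with one of `F'₁,F'₂,F'₃`,
and `⟨E, E'⟩ = 0`. -/
theorem two_special_minusOneClasses (F F' : Fin 3 → (Fin 8 → ℤ)) (E E' : Fin 8 → ℤ)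
    (hE : IsMinusOneClass E) (hE' : IsMinusOneClass E')
    (hF : ∀ i, IsMinusTwoClass (F i)) (hF' : ∀ i, IsMinusTwoClass (F' i))
    (hEF : ∀ i, dpForm E (F i) = 1) (hE'F' : ∀ i, dpForm E' (F' i) = 1)
    (horth : ∀ i j, i ≠ j → dpForm (F i) (F j) = 0)
    (horth' : ∀ i j, i ≠ j → dpForm (F' i) (F' j) = 0)
    (h2E : (2 : ℤ) • E = -dpK - F 0 - F 1 - F 2)
    (h2E' : (2 : ℤ) • E' = -dpK - F' 0 - F' 1 - F' 2)
    (hcross : ∀ i j, F i ≠ F' j → dpForm (F i) (F' j) = 0)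
    (hne : E ≠ E') :
    ({p : Fin 3 × Fin 3 | F p.1 = F' p.2} : Set (Fin 3 × Fin 3)).ncard = 1 ∧
    dpForm E E' = 0 := by
  classical
  set s : Finset (Fin 3 × Fin 3) := Finset.univ.filter (fun p => F p.1 = F' p.2) with hs
  -- value of each cross term
  have hterm : ∀ i j, dpForm (F i) (F' j) = if F i = F' j then -2 else 0 := by
    intro i j
    by_cases h : F i = F' j
    · rw [if_pos h, h]; exact (hF' j).1
    · rw [if_neg h]; exact hcross i j h
  have hKF : ∀ i, dpForm dpK (F i) = 0 := fun i => by
    rw [dpForm_comm]; exact (hF i).2.1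
  have hKF' : ∀ i, dpForm dpK (F' i) = 0 := fun i => by
    rw [dpForm_comm]; exact (hF' i).2.1
  -- compute 4 * ⟨E, E'⟩
  have expand : 4 * dpForm E E' =
      2 + ∑ p : Fin 3 × Fin 3, dpForm (F p.1) (F' p.2) := by
    have h4 : dpForm ((2 : ℤ) • E) ((2 : ℤ) • E') = 4 * dpForm E E' := by
      rw [dpForm_smul_left, dpForm_smul_right]; ring
    rw [← h4, h2E, h2E']
    simp only [dpForm_sub_left, dpForm_sub_right, dpForm_neg_left, dpForm_neg_right]
    rw [dpKK]
    simp only [hKF, hKF']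
    have hFK : ∀ i, dpForm (F i) dpK = 0 := fun i => (hF i).2.1
    simp only [hFK]
    rw [Fintype.sum_prod_type]
    simp only [Fin.sum_univ_three]
    ring
  have hsum : ∑ p : Fin 3 × Fin 3, dpForm (F p.1) (F' p.2) = -2 * s.card := by
    calc ∑ p : Fin 3 × Fin 3, dpForm (F p.1) (F' p.2)
        = ∑ p : Fin 3 × Fin 3, if F p.1 = F' p.2 then (-2 : ℤ) else 0 := by
          exact Finset.sum_congr rfl fun p _ => hterm p.1 p.2
      _ = ∑ p ∈ s, (-2 : ℤ) := by rw [hs, Finset.sum_filter]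
      _ = -2 * s.card := by rw [Finset.sum_const]; ring
  have key : 4 * dpForm E E' = 2 - 2 * s.card := by
    rw [expand, hsum]; ring
  -- injectivity of the first projection on s
  have hfst : Set.InjOn Prod.fst (s : Set (Fin 3 × Fin 3)) := by
    intro p hp q hq hpq
    simp only [hs, Finset.coe_filter, Set.mem_setOf_eq] at hp hq
    have h1 : F' p.2 = F' q.2 := by rw [← hp.2, ← hq.2, hpq]
    have h2 : p.2 = q.2 := by
      by_contra hne2
      have := horth' p.2 q.2 hne2
      rw [h1] at this
      have := (hF' q.2).1
      omega
    exact Prod.ext hpq h2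
  have hsnd : Set.InjOn Prod.snd (s : Set (Fin 3 × Fin 3)) := by
    intro p hp q hq hpq
    simp only [hs, Finset.coe_filter, Set.mem_setOf_eq] at hp hq
    have h1 : F p.1 = F q.1 := by rw [hp.2, hq.2, hpq]
    have h2 : p.1 = q.1 := by
      by_contra hne2
      have := horth p.1 q.1 hne2
      rw [h1] at this
      have := (hF q.1).1
      omega
    exact Prod.ext h2 hpq
  have hcard3 : s.card ≤ 3 := by
    have := Finset.card_le_card_of_injOn Prod.fst
      (fun p _ => Finset.mem_univ p.1) (by
        intro p hp q hq h
        exact hfst (by exact_mod_cast hp) (by exact_mod_cast hq) h)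
    simpa using this
  -- rule out s.card = 3
  have hnot3 : s.card ≠ 3 := by
    intro h3
    -- fst : s → Fin 3 is injective with full cardinality, hence the image is univ
    have himg : s.image Prod.fst = Finset.univ := by
      apply Finset.eq_univ_of_card
      rw [Finset.card_image_of_injOn (fun p hp q hq h => hfst (by exact_mod_cast hp)
        (by exact_mod_cast hq) h), h3]
      simp
    -- choose j i
    have hj : ∀ i : Fin 3, ∃ j : Fin 3, F i = F' j := by
      intro i
      have : i ∈ s.image Prod.fst := himg ▸ Finset.mem_univ i
      obtain ⟨p, hp, hpi⟩ := Finset.mem_image.mp this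
      rw [hs, Finset.mem_filter] at hp
      exact ⟨p.2, hpi ▸ hp.2⟩
    choose j hjeq using hj
    have hjinj : Function.Injective j := by
      intro a b hab
      by_contra hne2
      have h0 := horth a b hne2
      have : F a = F b := by rw [hjeq a, hjeq b, hab]
      rw [this] at h0
      have := (hF b).1
      omega
    have hjbij : Function.Bijective j := Finite.injective_iff_bijective.mp hjinj
    have hsumeq : F 0 + F 1 + F 2 = F' 0 + F' 1 + F' 2 := by
      have h1 : ∑ i : Fin 3, F i = ∑ i : Fin 3, F' (j i) :=
        Finset.sum_congr rfl fun i _ => hjeq i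
      have h2 : ∑ i : Fin 3, F' (j i) = ∑ i : Fin 3, F' i :=
        Function.Bijective.sum_comp hjbij _
      have := h1.trans h2
      simpa [Fin.sum_univ_three] using this
    apply hne
    have h2eq : (2 : ℤ) • E = (2 : ℤ) • E' := by
      rw [h2E, h2E']
      funext k
      have := congrFun hsumeq k
      simp only [Pi.add_apply] at this
      simp only [Pi.sub_apply, Pi.neg_apply]
      omega
    funext k
    have := congrFun h2eq k
    simp only [Pi.smul_apply, smul_eq_mul] at this
    omega
  have hcard1 : s.card = 1 := by omega
  constructor
  · have hset : ({p : Fin 3 × Fin 3 | F p.1 = F' p.2} : Set (Fin 3 × Fin 3)) = ↑s := by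
      ext p; simp [hs]
    rw [hset, Set.ncard_coe_finset, hcard1]
  · omega
end

section
/- Let F_1 = l_1 - l_2 and F_2 = l_2 - l_3 (two (-2)-classes with ⟨F_1, F_2⟩ = 1). The number of (-1)-classes D among the 56 with ⟨D, F_1⟩ = 0 and ⟨D, F_2⟩ = 0 is exactly 20. -/
/-!
Write a class as `D = d l₀ - ∑ mᵢ lᵢ`. Being a `(-1)`-class means `∑ mᵢ = 3d - 1` and
`∑ mᵢ² = d² + 1`, so Cauchy–Schwarz gives `0 ≤ d ≤ 3`. For each such `d` there is a `c` with
`∑ (mᵢ - c)(mᵢ - c - 1) = 0`; the summands are products of consecutive integers, hence all vanish,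
so every `mᵢ` is `c` or `c + 1`, and `∑ mᵢ` fixes how many are `c + 1`. This lists the 56 classes,
among which the ones orthogonal to `l₁ - l₂` and `l₂ - l₃` are counted directly.
-/

open Finset

/-- The class `d l₀ - ∑ᵢ mᵢ lᵢ₊₁` with multiplicities `mᵢ = c + [i ∈ s]`. -/
def ofMultiplicities (d c : ℤ) (s : Finset (Fin 7)) : Fin 8 → ℤ :=
  Fin.cons d fun i => -(c + if i ∈ s then 1 else 0)

def minusOneClasses : Finset (Fin 8 → ℤ) :=
  (powersetCard 6 univ).image (ofMultiplicities 0 (-1)) ∪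
  (powersetCard 2 univ).image (ofMultiplicities 1 0) ∪
  (powersetCard 5 univ).image (ofMultiplicities 2 0) ∪
  (powersetCard 1 univ).image (ofMultiplicities 3 1)

set_option maxRecDepth 10000 in
theorem isMinusOneClass_of_mem_minusOneClasses : ∀ D ∈ minusOneClasses, IsMinusOneClass D := by
  unfold IsMinusOneClass
  decide

section
variable {ι : Type*} [Fintype ι]

theorem sum_sub_mul_sub_sub_one (m : ι → ℤ) (c : ℤ) :
    ∑ i, (m i - c) * (m i - c - 1) =
      ∑ i, m i ^ 2 - (2 * c + 1) * ∑ i, m i + Fintype.card ι * (c * (c + 1)) := by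
  calc ∑ i, (m i - c) * (m i - c - 1) = ∑ i, (m i ^ 2 - (2 * c + 1) * m i + c * (c + 1)) :=
        sum_congr rfl fun i _ => by ring
    _ = _ := by rw [sum_add_distrib, sum_sub_distrib, ← mul_sum, sum_const, card_univ, nsmul_eq_mul]

theorem exists_eq_add_indicator_of_sum_eq_zero [DecidableEq ι] (m : ι → ℤ) (c : ℤ)
    (h : ∑ i, (m i - c) * (m i - c - 1) = 0) :
    ∃ s : Finset ι, ∀ i, m i = c + if i ∈ s then 1 else 0 := by
  have hnonneg : ∀ i ∈ univ, 0 ≤ (m i - c) * (m i - c - 1) := fun i _ => by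
    nlinarith [Int.le_self_sq (m i - c)]
  refine ⟨univ.filter fun i => m i = c + 1, fun i => ?_⟩
  have hi := (sum_eq_zero_iff_of_nonneg hnonneg).1 h i (mem_univ i)
  by_cases hmem : m i = c + 1
  · simp [hmem]
  · simp only [mem_filter, mem_univ, true_and, hmem, if_false]
    rcases mul_eq_zero.1 hi with hi | hi <;> omega
end

theorem dpForm_self (D : Fin 8 → ℤ) : dpForm D D = D 0 ^ 2 - ∑ i : Fin 7, D i.succ ^ 2 := by
  simp only [dpForm, sq]

theorem dpK_succ (i : Fin 7) : dpK i.succ = 1 := by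
  fin_cases i <;> rfl

theorem dpForm_dpK (D : Fin 8 → ℤ) : dpForm D dpK = -3 * D 0 - ∑ i : Fin 7, D i.succ := by
  simp only [dpForm, dpK_succ, mul_one, show dpK 0 = -3 from rfl]
  ring

namespace IsMinusOneClass

variable {D : Fin 8 → ℤ} (hD : IsMinusOneClass D)
include hD

theorem sum_multiplicities : ∑ i : Fin 7, -D i.succ = 3 * D 0 - 1 := by
  have := hD.2.1
  rw [dpForm_dpK] at this
  simp only [sum_neg_distrib]
  linarith

theorem sum_sq_multiplicities : ∑ i : Fin 7, (-D i.succ) ^ 2 = D 0 ^ 2 + 1 := by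
  have := hD.1
  rw [dpForm_self] at this
  simp only [neg_sq]
  linarith

theorem le_three : D 0 ≤ 3 := by
  have hcs := sq_sum_le_card_mul_sum_sq (s := univ) (f := fun i : Fin 7 => -D i.succ)
  rw [hD.sum_multiplicities, hD.sum_sq_multiplicities] at hcs
  simp only [card_univ, Fintype.card_fin, Nat.cast_ofNat] at hcs
  nlinarith

theorem exists_eq_ofMultiplicities {d c : ℤ} (hd : D 0 = d)
    (hc : d ^ 2 + 1 - (2 * c + 1) * (3 * d - 1) + 7 * (c * (c + 1)) = 0) :
    ∃ s : Finset (Fin 7), (#s : ℤ) = 3 * d - 1 - 7 * c ∧ D = ofMultiplicities d c s := by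
  subst hd
  have hsum := sum_sub_mul_sub_sub_one (fun i : Fin 7 => -D i.succ) c
  rw [hD.sum_multiplicities, hD.sum_sq_multiplicities, Fintype.card_fin, Nat.cast_ofNat, hc] at hsum
  obtain ⟨s, hs⟩ := exists_eq_add_indicator_of_sum_eq_zero _ c hsum
  refine ⟨s, ?_, ?_⟩
  · have := hD.sum_multiplicities
    simp only [hs, sum_add_distrib, sum_const, card_univ, Fintype.card_fin, nsmul_eq_mul,
      Nat.cast_ofNat, sum_ite_mem, univ_inter, mul_one] at this
    linarith
  · ext i
    refine Fin.cases rfl (fun i => ?_) i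
    simp only [ofMultiplicities, Fin.cons_succ]
    linarith [hs i]

theorem mem_minusOneClasses : D ∈ minusOneClasses := by
  obtain ⟨d, hd⟩ : ∃ d, D 0 = d := ⟨_, rfl⟩
  have hd₀ : 0 ≤ d := hd ▸ hD.2.2
  have hd₃ : d ≤ 3 := hd ▸ hD.le_three
  simp only [minusOneClasses, mem_union, mem_image, mem_powersetCard, subset_univ, true_and]
  interval_cases d
  · obtain ⟨s, hs, rfl⟩ := hD.exists_eq_ofMultiplicities (c := -1) hd (by norm_num)
    exact .inl <| .inl <| .inl ⟨s, by omega, rfl⟩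
  · obtain ⟨s, hs, rfl⟩ := hD.exists_eq_ofMultiplicities (c := 0) hd (by norm_num)
    exact .inl <| .inl <| .inr ⟨s, by omega, rfl⟩
  · obtain ⟨s, hs, rfl⟩ := hD.exists_eq_ofMultiplicities (c := 0) hd (by norm_num)
    exact .inl <| .inr ⟨s, by omega, rfl⟩
  · obtain ⟨s, hs, rfl⟩ := hD.exists_eq_ofMultiplicities (c := 1) hd (by norm_num)
    exact .inr ⟨s, by omega, rfl⟩

end IsMinusOneClass

set_option maxRecDepth 10000 in
theorem card_filter_minusOneClasses_orthogonal_A2 :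
    #{D ∈ minusOneClasses | dpForm D (l 1 - l 2) = 0 ∧ dpForm D (l 2 - l 3) = 0} = 20 := by
  decide

theorem mem_minusOneClasses_iff {D : Fin 8 → ℤ} : D ∈ minusOneClasses ↔ IsMinusOneClass D :=
  ⟨isMinusOneClass_of_mem_minusOneClasses D, IsMinusOneClass.mem_minusOneClasses⟩

/-- For the `(-2)`-classes `F₁ = l 1 - l 2` and `F₂ = l 2 - l 3`, exactly `20` of the
`56` `(-1)`-classes `D` satisfy `⟨D, F₁⟩ = 0` and `⟨D, F₂⟩ = 0`. -/
theorem card_minusOneClasses_A2 :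
    ({D : Fin 8 → ℤ | IsMinusOneClass D ∧
        dpForm D (l 1 - l 2) = 0 ∧ dpForm D (l 2 - l 3) = 0} :
        Set (Fin 8 → ℤ)).ncard = 20 := by
  have hA₂ : {D : Fin 8 → ℤ | IsMinusOneClass D ∧
      dpForm D (l 1 - l 2) = 0 ∧ dpForm D (l 2 - l 3) = 0} =
      ↑{D ∈ minusOneClasses | dpForm D (l 1 - l 2) = 0 ∧ dpForm D (l 2 - l 3) = 0} := by
    ext D
    simp [mem_minusOneClasses_iff]
  rw [hA₂, Set.ncard_coe_finset, card_filter_minusOneClasses_orthogonal_A2]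
end
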